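/- arXiv:2409.04765 — 3 statements merged into one kernel-verified Lean document; each statement's English description precedes it below -/
import Mathlib

section
/- For a nonempty closed convex set S ⊆ ℝ^m and any points x₁, x₂ ∈ S and vector ξ ∈ ℝ^m, the projection of ξ onto the tangent cone of S at x₁ satisfies ⟨x₁ - x₂, Π_S(x₁, ξ)⟩ ≤ ⟨x₁ - x₂, ξ⟩. -/
/-!
The tangent cone `T` is the closure of the convex cone generated by `S - x₁`, so it is a closed
convex cone containing `x₂ - x₁`. Since a convex cone is closed under addition, `p + (x₂ - x₁) ∈ T`,
and the variational inequality of the projection `p` tested at this point reads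
`⟪ξ - p, x₂ - x₁⟫ ≤ 0`.
-/

open RealInnerProductSpace

variable {E : Type*} [NormedAddCommGroup E] [InnerProductSpace ℝ E]

theorem ConvexCone.inner_sub_le_zero_of_forall_dist_le (K : ConvexCone ℝ E) {ξ p d : E}
    (hp : p ∈ K) (hmin : ∀ y ∈ K, dist ξ p ≤ dist ξ y) (hd : d ∈ K) : ⟪ξ - p, d⟫ ≤ 0 := by
  have : Nonempty K := ⟨⟨p, hp⟩⟩
  have hbdd : BddBelow (Set.range fun y : K ↦ ‖ξ - y‖) :=
    ⟨0, by rintro _ ⟨y, rfl⟩; exact norm_nonneg _⟩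
  have hinf : ‖ξ - p‖ = ⨅ y : K, ‖ξ - y‖ :=
    le_antisymm (le_ciInf fun y ↦ by simpa only [dist_eq_norm] using hmin y y.2)
      (ciInf_le hbdd ⟨p, hp⟩)
  simpa using (norm_eq_iInf_iff_real_inner_le_zero K.convex hp).1 hinf (p + d) (K.add_mem hp hd)

theorem Convex.setOf_inv_smul_sub_eq_hull {S : Set E} (hS : Convex ℝ S) (x : E) :
    {v | ∃ δ : ℝ, 0 < δ ∧ ∃ s ∈ S, v = δ⁻¹ • (s - x)} = ConvexCone.hull ℝ ((· - x) '' S) := by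
  have hconv : Convex ℝ ((· - x) '' S) := by simpa only [neg_add_eq_sub] using hS.translate (-x)
  ext v
  simp only [Set.mem_ofPred_eq, SetLike.mem_coe, ConvexCone.mem_hull_of_convex hconv,
    Set.mem_smul_set, Set.exists_mem_image]
  constructor
  · rintro ⟨δ, hδ, s, hs, rfl⟩
    exact ⟨δ⁻¹, inv_pos.2 hδ, s, hs, rfl⟩
  · rintro ⟨c, hc, s, hs, rfl⟩
    exact ⟨c⁻¹, inv_pos.2 hc, s, hs, by rw [inv_inv]⟩

theorem stmt0_general (m : ℕ) (S : Set (EuclideanSpace ℝ (Fin m)))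
    (hconv : Convex ℝ S)
    (x₁ x₂ : EuclideanSpace ℝ (Fin m)) (hx₂ : x₂ ∈ S)
    (ξ p : EuclideanSpace ℝ (Fin m))
    (T : Set (EuclideanSpace ℝ (Fin m)))
    (hT : T = closure {v | ∃ δ : ℝ, 0 < δ ∧ ∃ s ∈ S, v = δ⁻¹ • (s - x₁)})
    (hpT : p ∈ T) (hproj : ∀ y ∈ T, dist ξ p ≤ dist ξ y) :
    ⟪x₁ - x₂, p⟫ ≤ ⟪x₁ - x₂, ξ⟫ := by
  set K := (ConvexCone.hull ℝ ((· - x₁) '' S)).closure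
  obtain rfl : T = K := by rw [hT, hconv.setOf_inv_smul_sub_eq_hull, ConvexCone.coe_closure]
  have hd : x₂ - x₁ ∈ K := subset_closure <| ConvexCone.subset_hull ⟨x₂, hx₂, rfl⟩
  have key := K.inner_sub_le_zero_of_forall_dist_le hpT hproj hd
  rw [← neg_sub x₁ x₂, inner_neg_right, inner_sub_left] at key
  linarith [real_inner_comm p (x₁ - x₂), real_inner_comm ξ (x₁ - x₂)]

/-- For a nonempty closed convex set `S ⊆ ℝ^m`, points `x₁ x₂ ∈ S` and a
vector `ξ`, the metric projection `p` of `ξ` onto the tangent cone of `S` at `x₁`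
(the closure of `⋃_{δ>0} (1/δ)(S - x₁)`) satisfies `⟪x₁ - x₂, p⟫ ≤ ⟪x₁ - x₂, ξ⟫`. -/
theorem stmt0 (m : ℕ) (S : Set (EuclideanSpace ℝ (Fin m)))
    (hne : S.Nonempty) (hcl : IsClosed S) (hconv : Convex ℝ S)
    (x₁ x₂ : EuclideanSpace ℝ (Fin m)) (hx₁ : x₁ ∈ S) (hx₂ : x₂ ∈ S)
    (ξ p : EuclideanSpace ℝ (Fin m))
    (T : Set (EuclideanSpace ℝ (Fin m)))
    (hT : T = closure {v | ∃ δ : ℝ, 0 < δ ∧ ∃ s ∈ S, v = δ⁻¹ • (s - x₁)})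
    (hpT : p ∈ T) (hproj : ∀ y ∈ T, dist ξ p ≤ dist ξ y) :
    ⟪x₁ - x₂, p⟫ ≤ ⟪x₁ - x₂, ξ⟫ :=
  stmt0_general m S hconv x₁ x₂ hx₂ ξ p T hT hpT hproj
end

section
/- For any vectors u, v ∈ ℝ^q, the inner product of u with the signum of v satisfies u^⊤ sgn(v) ≥ ‖u‖₁ - 2√q‖v - u‖, i.e., replacing sgn(u) by sgn(v) in the term u^⊤ sgn(·) incurs an error of at most 2√q‖v - u‖ from ‖u‖₁. -/
/-!
Since `b * sgn b = |b|` and `|sgn b| ≤ 1`, each coordinate satisfies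
`a * sgn b ≥ |b| - |b - a| ≥ |a| - 2 |b - a|`; summing and bounding the 1-norm of `v - u`
by `√q` times its Euclidean norm (Cauchy–Schwarz) gives the claim.
-/

namespace Real

theorem abs_sign_le_one (r : ℝ) : |sign r| ≤ 1 := by
  rcases sign_apply_eq r with h | h | h <;> simp [h]

theorem mul_sign_self (r : ℝ) : r * sign r = |r| := by
  rcases lt_trichotomy r 0 with h | rfl | h
  · rw [sign_of_neg h, abs_of_neg h, mul_neg_one]
  · simp
  · rw [sign_of_pos h, abs_of_pos h, mul_one]

theorem abs_sub_two_mul_abs_sub_le_mul_sign (a b : ℝ) :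
    |a| - 2 * |b - a| ≤ a * sign b := by
  have hsign : (b - a) * sign b ≤ |b - a| :=
    calc (b - a) * sign b ≤ |(b - a) * sign b| := le_abs_self _
      _ = |b - a| * |sign b| := abs_mul _ _
      _ ≤ |b - a| := mul_le_of_le_one_right (abs_nonneg _) (abs_sign_le_one b)
  have htri : |a| - |b| ≤ |b - a| := abs_sub_comm a b ▸ abs_sub_abs_le_abs_sub a b
  calc |a| - 2 * |b - a| ≤ b * sign b - |b - a| := by rw [mul_sign_self]; linarith
    _ ≤ a * sign b := by linarith

end Real

theorem Finset.sum_abs_le_sqrt_card_mul_sqrt_sum_sq {ι : Type*} (s : Finset ι) (f : ι → ℝ) :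
    ∑ i ∈ s, |f i| ≤ Real.sqrt s.card * Real.sqrt (∑ i ∈ s, f i ^ 2) := by
  simpa [sq_abs] using Real.sum_mul_le_sqrt_mul_sqrt s (fun _ => (1 : ℝ)) (fun i => |f i|)

/-- For `u, v ∈ ℝ^q`, `u^⊤ sgn(v) ≥ ‖u‖₁ - 2√q·‖v - u‖`:
replacing `sgn(u)` by `sgn(v)` incurs an error of at most `2√q‖v - u‖` from `‖u‖₁`. -/
theorem stmt5 (q : ℕ) (u v : Fin q → ℝ) :
    (∑ i, |u i|) - 2 * Real.sqrt q * Real.sqrt (∑ i, (v i - u i) ^ 2)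
      ≤ ∑ i, u i * Real.sign (v i) := by
  have hCS := Finset.univ.sum_abs_le_sqrt_card_mul_sqrt_sum_sq (fun i => v i - u i)
  rw [Finset.card_univ, Fintype.card_fin] at hCS
  calc (∑ i, |u i|) - 2 * Real.sqrt q * Real.sqrt (∑ i, (v i - u i) ^ 2)
      ≤ ∑ i, (|u i| - 2 * |v i - u i|) := by
        rw [Finset.sum_sub_distrib, ← Finset.mul_sum]; linarith
    _ ≤ ∑ i, u i * Real.sign (v i) :=
        Finset.sum_le_sum fun i _ => Real.abs_sub_two_mul_abs_sub_le_mul_sign (u i) (v i)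
end

section
/- Suppose μᵢ ∈ ℝ^q for i = 1,...,N, the constraint functions satisfy ‖gᵢ(t,xᵢ)‖ ≤ K_g, and K_μ ≥ N·K_g. If the communication graph is connected with symmetric adjacency a_{ij}, then Σᵢ gᵢ(t, xᵢ*)^⊤ μᵢ - (K_μ/2) Σᵢ Σⱼ a_{ij}‖μᵢ - μⱼ‖₁ ≤ Σᵢ gᵢ(t, xᵢ*)^⊤ μ̄ for μ̄ = (1/N)Σᵢ μᵢ; consequently, when Σᵢ gᵢ(t, xᵢ*) ≤ 0 componentwise and all μᵢ ≥ 0, the expression V₂ = Σᵢ gᵢ(t,xᵢ*)^⊤μᵢ - (K_μ/2)Σᵢ Σⱼ a_{ij}‖μᵢ-μⱼ‖₁ is nonpositive. -/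
/-!
With μ̄ the mean multiplier, `Σᵢ gᵢ·μᵢ - Σᵢ gᵢ·μ̄ = (1/N) Σᵢ Σᵢ' gᵢ·(μᵢ - μᵢ')`, and each summand
is at most `K_g ‖μᵢ - μᵢ'‖₁`. By the triangle inequality along a path of the connected graph,
`‖μᵢ - μᵢ'‖₁` is at most the sum of `‖μₖ - μₗ‖₁` over the edges `{k, l}`, i.e. half the sum over
ordered adjacent pairs, hence at most half the weighted disagreement since `a_{kl} ≥ 1` on edges.
Summing the `N²` terms gives the first inequality because `N K_g ≤ K_μ`; the second follows from
`Σᵢ gᵢ·μ̄ = (1/N) Σⱼ (Σᵢ gᵢⱼ)(Σᵢ μᵢⱼ) ≤ 0`.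
-/

open Finset

namespace SimpleGraph

variable {V : Type*} {G : SimpleGraph V}

theorem sum_darts_edge_eq_two_nsmul_sum_edgeFinset {M : Type*} [AddCommMonoid M] [Fintype V]
    [DecidableEq V] [DecidableRel G.Adj] (F : Sym2 V → M) :
    ∑ d : G.Dart, F d.edge = 2 • ∑ e ∈ G.edgeFinset, F e := by
  rw [← sum_fiberwise_of_maps_to (g := Dart.edge) (t := G.edgeFinset)
    (fun d _ => by simp), smul_sum]
  refine sum_congr rfl fun e he => ?_
  rw [sum_congr rfl (fun d hd => by rw [(mem_filter.1 hd).2]), sum_const,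
    G.dart_edge_fiber_card e (mem_edgeFinset.1 he)]

theorem Walk.IsTrail.sum_map_edges_le_sum_edgeFinset {M : Type*} [AddCommMonoid M]
    [PartialOrder M] [IsOrderedAddMonoid M] [Fintype G.edgeSet] {u v : V} {p : G.Walk u v}
    (hp : p.IsTrail) {F : Sym2 V → M} (hF : ∀ e, 0 ≤ F e) :
    (p.edges.map F).sum ≤ ∑ e ∈ G.edgeFinset, F e := by
  classical
  rw [← List.sum_toFinset _ hp.edges_nodup]
  exact sum_le_sum_of_subset_of_nonneg
    (fun e he => mem_edgeFinset.2 (p.edges_subset_edgeSet (List.mem_toFinset.1 he)))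
    (fun e _ _ => hF e)

theorem sum_darts_le_sum_mul [Fintype V] [DecidableRel G.Adj] {a ψ : V → V → ℝ}
    (ha : ∀ x y, 0 ≤ a x y) (hadj : ∀ x y, G.Adj x y → 1 ≤ a x y) (hψ : ∀ x y, 0 ≤ ψ x y) :
    ∑ d : G.Dart, ψ d.fst d.snd ≤ ∑ x, ∑ y, a x y * ψ x y := by
  rw [← sum_product']
  calc ∑ d : G.Dart, ψ d.fst d.snd
      = ∑ p ∈ univ.map ⟨Dart.toProd, Dart.toProd_injective⟩, ψ p.1 p.2 := by
        rw [sum_map]; rfl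
    _ ≤ ∑ p ∈ univ.map ⟨Dart.toProd, Dart.toProd_injective⟩, a p.1 p.2 * ψ p.1 p.2 := by
        refine sum_le_sum fun p hp => ?_
        obtain ⟨d, -, rfl⟩ := mem_map.1 hp
        exact le_mul_of_one_le_left (hψ _ _) (hadj _ _ d.adj)
    _ ≤ ∑ p ∈ univ ×ˢ univ, a p.1 p.2 * ψ p.1 p.2 :=
        sum_le_sum_of_subset_of_nonneg (fun _ _ => mem_univ _)
          (fun p _ _ => mul_nonneg (ha _ _) (hψ _ _))

end SimpleGraph

open SimpleGraph

section

variable {V α : Type*} {G : SimpleGraph V} [PseudoMetricSpace α]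

def edgeDist (f : V → α) : Sym2 V → ℝ :=
  Sym2.lift ⟨fun x y => dist (f x) (f y), fun _ _ => dist_comm _ _⟩

theorem edgeDist_mk (f : V → α) (x y : V) : edgeDist f s(x, y) = dist (f x) (f y) := rfl

theorem edgeDist_nonneg (f : V → α) (e : Sym2 V) : 0 ≤ edgeDist f e :=
  e.ind fun _ _ => dist_nonneg

theorem dist_le_sum_edgeDist_of_walk (f : V → α) {u v : V} (p : G.Walk u v) :
    dist (f u) (f v) ≤ (p.edges.map (edgeDist f)).sum := by
  induction p with
  | nil => simp
  | cons h p ih =>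
    simp only [Walk.edges_cons, List.map_cons, List.sum_cons, edgeDist_mk]
    exact (dist_triangle _ _ _).trans (by gcongr)

theorem two_mul_dist_le_sum_mul_dist_of_connected [Fintype V] (hG : G.Connected) (f : V → α)
    {a : V → V → ℝ} (ha : ∀ x y, 0 ≤ a x y) (hadj : ∀ x y, G.Adj x y → 1 ≤ a x y) (u v : V) :
    2 * dist (f u) (f v) ≤ ∑ x, ∑ y, a x y * dist (f x) (f y) := by
  classical
  let p := (hG.preconnected u v).some.toPath
  calc 2 * dist (f u) (f v) ≤ 2 * ∑ e ∈ G.edgeFinset, edgeDist f e := by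
        gcongr
        exact (dist_le_sum_edgeDist_of_walk f p.1).trans
          (p.2.isTrail.sum_map_edges_le_sum_edgeFinset (edgeDist_nonneg f))
    _ = ∑ d : G.Dart, edgeDist f d.edge := by
        rw [sum_darts_edge_eq_two_nsmul_sum_edgeFinset, two_nsmul, two_mul]
    _ ≤ ∑ x, ∑ y, a x y * dist (f x) (f y) :=
        sum_darts_le_sum_mul (ψ := fun x y => dist (f x) (f y)) ha hadj fun _ _ => dist_nonneg

end

section

variable {ι κ : Type*} [Fintype ι] [Fintype κ]

theorem sum_mul_le_mul_sum_abs {g x : κ → ℝ} {K : ℝ} (hg : ∀ j, |g j| ≤ K) :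
    ∑ j, g j * x j ≤ K * ∑ j, |x j| := by
  rw [mul_sum]
  refine sum_le_sum fun j _ => ?_
  calc g j * x j ≤ |g j| * |x j| := by rw [← abs_mul]; exact le_abs_self _
    _ ≤ K * |x j| := by gcongr; exact hg j

theorem sum_mul_sub_sum_mul_mean [Nonempty ι] (g μ : ι → κ → ℝ) :
    ∑ i, ∑ j, g i j * μ i j - ∑ i, ∑ j, g i j * ((1 / Fintype.card ι) * ∑ i', μ i' j)
      = (1 / Fintype.card ι) * ∑ i, ∑ i', ∑ j, g i j * (μ i j - μ i' j) := by
  have hN : (Fintype.card ι : ℝ) ≠ 0 := by positivity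
  rw [mul_sum, ← sum_sub_distrib]
  refine sum_congr rfl fun i _ => ?_
  simp_rw [← sum_sub_distrib, mul_sum]
  rw [sum_comm]
  refine sum_congr rfl fun j _ => ?_
  simp only [← mul_sum, mul_sub, sum_sub_distrib, sum_const, card_univ, nsmul_eq_mul]
  field_simp

theorem sum_mul_sub_sum_mul_mean_le [Nonempty ι] {g μ : ι → κ → ℝ} {K D : ℝ} (hK : 0 ≤ K)
    (hg : ∀ i j, |g i j| ≤ K) (hD : ∀ i i', ∑ j, |μ i j - μ i' j| ≤ D) :
    ∑ i, ∑ j, g i j * μ i j - ∑ i, ∑ j, g i j * ((1 / Fintype.card ι) * ∑ i', μ i' j)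
      ≤ Fintype.card ι * K * D := by
  rw [sum_mul_sub_sum_mul_mean]
  calc (1 / Fintype.card ι : ℝ) * ∑ i, ∑ i', ∑ j, g i j * (μ i j - μ i' j)
      ≤ (1 / Fintype.card ι) * ∑ i : ι, ∑ i' : ι, K * D := by
        gcongr with i _ i' _
        exact (sum_mul_le_mul_sum_abs (hg i)).trans (by gcongr; exact hD i i')
    _ = Fintype.card ι * K * D := by
        have hN : (Fintype.card ι : ℝ) ≠ 0 := by positivity
        simp only [sum_const, card_univ, nsmul_eq_mul]
        field_simp

theorem sum_mul_mean_nonpos {g μ : ι → κ → ℝ} {c : ℝ} (hc : 0 ≤ c) (hg : ∀ j, ∑ i, g i j ≤ 0)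
    (hμ : ∀ i j, 0 ≤ μ i j) : ∑ i, ∑ j, g i j * (c * ∑ i', μ i' j) ≤ 0 := by
  rw [sum_comm]
  refine sum_nonpos fun j _ => ?_
  rw [← sum_mul]
  exact mul_nonpos_of_nonpos_of_nonneg (hg j) (mul_nonneg hc (sum_nonneg fun i _ => hμ i j))

end

theorem stmt15_general (N q : ℕ) (G : SimpleGraph (Fin N)) (hG : G.Connected)
    (a : Fin N → Fin N → ℝ)
    (hnn : ∀ i j, 0 ≤ a i j) (hedge : ∀ i j, G.Adj i j → 1 ≤ a i j)
    (Kg Kμ : ℝ) (g μ : Fin N → Fin q → ℝ)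
    (hKg : ∀ i, Real.sqrt (∑ j, (g i j) ^ 2) ≤ Kg)
    (hKμ : (N : ℝ) * Kg ≤ Kμ) :
    ((∑ i, ∑ j, g i j * μ i j)
        - (Kμ / 2) * ∑ i, ∑ i', a i i' * (∑ j, |μ i j - μ i' j|)
      ≤ ∑ i, ∑ j, g i j * ((1 / (N : ℝ)) * ∑ i', μ i' j)) ∧
    ((∀ j, (∑ i, g i j) ≤ 0) → (∀ i j, 0 ≤ μ i j) →
      (∑ i, ∑ j, g i j * μ i j)
        - (Kμ / 2) * ∑ i, ∑ i', a i i' * (∑ j, |μ i j - μ i' j|) ≤ 0) := by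
  have := hG.nonempty
  set S := ∑ i, ∑ i', a i i' * ∑ j, |μ i j - μ i' j|
  have hS : 0 ≤ S := sum_nonneg fun i _ => sum_nonneg fun i' _ =>
    mul_nonneg (hnn i i') (sum_nonneg fun j _ => abs_nonneg _)
  have hdisagree : ∀ i i', ∑ j, |μ i j - μ i' j| ≤ S / 2 := fun i i' => by
    have := two_mul_dist_le_sum_mul_dist_of_connected hG (fun i => WithLp.toLp 1 (μ i))
      hnn hedge i i'
    simp only [PiLp.dist_eq_of_L1, Real.dist_eq] at this
    linarith
  have hg : ∀ i j, |g i j| ≤ Kg := fun i j =>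
    (Real.abs_le_sqrt (single_le_sum (fun j _ => sq_nonneg (g i j)) (mem_univ j))).trans (hKg i)
  have hKg0 : 0 ≤ Kg := (Real.sqrt_nonneg _).trans (hKg (Classical.arbitrary _))
  have hdev := sum_mul_sub_sum_mul_mean_le hKg0 hg hdisagree
  rw [Fintype.card_fin] at hdev
  have hpenalty : N * Kg * (S / 2) ≤ Kμ / 2 * S := by nlinarith
  refine ⟨by linarith, fun hgsum hμ => ?_⟩
  have := sum_mul_mean_nonpos (c := 1 / (N : ℝ)) (by positivity) hgsum hμ
  linarith

/-- With `‖gᵢ‖ ≤ K_g`, `K_μ ≥ N·K_g`, and a connected communication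
graph with symmetric weights `a_{ij} ≥ 1` on edges, the multiplier disagreement
penalty dominates the feasibility cross-term:
`Σᵢ gᵢ^⊤μᵢ - (K_μ/2)ΣᵢΣⱼ a_{ij}‖μᵢ-μⱼ‖₁ ≤ Σᵢ gᵢ^⊤μ̄` for `μ̄ = (1/N)Σᵢμᵢ`;
consequently if `Σᵢ gᵢ ≤ 0` componentwise and all `μᵢ ≥ 0`, then `V₂ ≤ 0`. -/
theorem stmt15 (N q : ℕ) (hN : 1 ≤ N) (G : SimpleGraph (Fin N)) (hG : G.Connected)
    (a : Fin N → Fin N → ℝ) (hsym : ∀ i j, a i j = a j i)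
    (hnn : ∀ i j, 0 ≤ a i j) (hedge : ∀ i j, G.Adj i j → 1 ≤ a i j)
    (hnadj : ∀ i j, ¬ G.Adj i j → a i j = 0)
    (Kg Kμ : ℝ) (g μ : Fin N → Fin q → ℝ)
    (hKg : ∀ i, Real.sqrt (∑ j, (g i j) ^ 2) ≤ Kg)
    (hKμ : (N : ℝ) * Kg ≤ Kμ) :
    ((∑ i, ∑ j, g i j * μ i j)
        - (Kμ / 2) * ∑ i, ∑ i', a i i' * (∑ j, |μ i j - μ i' j|)
      ≤ ∑ i, ∑ j, g i j * ((1 / (N : ℝ)) * ∑ i', μ i' j)) ∧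
    ((∀ j, (∑ i, g i j) ≤ 0) → (∀ i j, 0 ≤ μ i j) →
      (∑ i, ∑ j, g i j * μ i j)
        - (Kμ / 2) * ∑ i, ∑ i', a i i' * (∑ j, |μ i j - μ i' j|) ≤ 0) :=
  stmt15_general N q G hG a hnn hedge Kg Kμ g μ hKg hKμ
end
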